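/- arXiv:2009.08620 — 2 statements merged into one kernel-verified Lean document; each statement's English description precedes it below -/
import Mathlib

section
/- For every ℓ ≥ 1, writing ℓ = nN + s with n ≥ 0 and 1 ≤ s ≤ N, and for every k = 1,…,N+1, the intermediate coefficient satisfies y_{k;ℓ(N+1)+k−1} = (n(N+1)+s−1)·C_N + C_{s+k−1} + u_{N+1} (as exponent vectors in ℤ^{N+1}). -/
/-- The initial exchange matrix `B₀` of type `A^{(1)}_N` (indices `1, …, N+1`). -/
def b0 (N : ℕ) : ℕ → ℕ → ℤ := fun i j =>
  if 1 ≤ i ∧ i ≤ N ∧ j = i + 1 then -1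
  else if 2 ≤ i ∧ i ≤ N + 1 ∧ j + 1 = i then 1
  else if i = 1 ∧ j = N + 1 then -1
  else if i = N + 1 ∧ j = 1 then 1
  else 0

/-- Matrix mutation `μ_k` in direction `k`. -/
def bmut (k : ℕ) (B : ℕ → ℕ → ℤ) : ℕ → ℕ → ℤ := fun i j =>
  if i = k ∨ j = k then -B i j
  else B i j + max (-B i k) 0 * B k j + B i k * max (B k j) 0

/-- `Bseq N m`: the exchange matrix after `m` cyclic mutations `μ₁, μ₂, …, μ_{N+1}, μ₁, …`. -/
def Bseq (N : ℕ) : ℕ → ℕ → ℕ → ℤ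
  | 0 => b0 N
  | m + 1 => bmut (m % (N + 1) + 1) (Bseq N m)

/-- Tropical coefficient mutation `μ_k` acting on the tuple of exponent vectors
(`y j : Fin (N+1) → ℤ` is the exponent vector of the `j`-th coefficient):
`y'_k = -y_k` and, for `j ≠ k`, `y'_j = y_j + [b_{kj}]₊ • y_k - b_{kj} • min (y_k, 0)`. -/
def coefMut (N k : ℕ) (B : ℕ → ℕ → ℤ) (y : ℕ → Fin (N + 1) → ℤ) :
    ℕ → Fin (N + 1) → ℤ := fun j i =>
  if j = k then -(y k i)
  else y j i + max (B k j) 0 * y k i - B k j * min (y k i) 0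

/-- `seedY N m j`: the exponent vector of the `j`-th coefficient after `m` cyclic mutations,
starting from the standard basis vectors (coordinate `i : Fin (N+1)` encodes the variable
`y_{i+1}`). -/
def seedY (N : ℕ) : ℕ → ℕ → Fin (N + 1) → ℤ
  | 0 => fun j i => if (i : ℕ) + 1 = j then 1 else 0
  | m + 1 => coefMut N (m % (N + 1) + 1) (Bseq N m) (seedY N m)


/-- The `j`-th standard basis vector `u_j` (coordinate `i : Fin (N+1)` encodes index `i+1`). -/
def uvec (N j : ℕ) : Fin (N + 1) → ℤ := fun i => if (i : ℕ) + 1 = j then 1 else 0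

/-- The fixed exponent vectors `ν_m` (`m ≥ 1`), extended `N`-periodically:
`ν_1 = -u_1 - u_{N+1}` and `ν_j = -u_j` for `2 ≤ j ≤ N`. -/
def nuvec (N m : ℕ) : Fin (N + 1) → ℤ :=
  if (m - 1) % N + 1 = 1 then -uvec N 1 - uvec N (N + 1)
  else -uvec N ((m - 1) % N + 1)

/-- `C_m := ν_1 + ν_2 + ⋯ + ν_m`, with `C_0 = 0`. -/
def Cvec (N m : ℕ) : Fin (N + 1) → ℤ := ∑ j ∈ Finset.Icc 1 m, nuvec N j

/-!
The vertex `k = m % (N + 1) + 1` mutated at step `m + 1` always has a nonpositive row in `B_m`,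
so the mutation only reverses the arrows at `k`, and `B_m` is `B_0` relabelled by the rotation
`i ↦ i + m` of the cycle. In the rotated labelling the coefficient recurrence is the same at every
step: the new `d`-th coefficient is the old `(d+1)`-st, plus `min (y_k, 0)` at the two neighbours
of `k`, and the last one is `-y_k`. During the first `N + 1` steps `y_k = u_k ≥ 0`, so the
coefficients are only rotated and end up as `-u_j`. From then on they keep the shape `IsSteady`,
in which `y_k = C_{t+1} + u_{N+1} ≤ 0` at step `t + N + 1`. The theorem reads off this value and
uses `C_{aN+t} = a C_N + C_t`.
-/

/-- The vertex `d` places after `m % (N + 1) + 1`, the direction of the `(m+1)`-st mutation,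
counted cyclically in `1, …, N + 1`. -/
def cycVertex (N m d : ℕ) : ℕ := (m + d) % (N + 1) + 1

lemma cycVertex_zero_left {N d : ℕ} (hd : d ≤ N) : cycVertex N 0 d = d + 1 := by
  rw [cycVertex, zero_add, Nat.mod_eq_of_lt (by omega)]

lemma cycVertex_succ_left (N m d : ℕ) : cycVertex N (m + 1) d = cycVertex N m (d + 1) := by
  rw [cycVertex, cycVertex, add_right_comm, add_assoc]

lemma cycVertex_period (N m : ℕ) : cycVertex N m (N + 1) = cycVertex N m 0 := by
  rw [cycVertex, cycVertex, Nat.add_mod_right, add_zero]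

lemma cycVertex_inj {N m a b : ℕ} (ha : a ≤ N) (hb : b ≤ N) :
    cycVertex N m a = cycVertex N m b ↔ a = b := by
  refine ⟨fun h => ?_, fun h => h ▸ rfl⟩
  have hmod : a % (N + 1) = b % (N + 1) :=
    Nat.ModEq.add_left_cancel' m (Nat.add_right_cancel h)
  rwa [Nat.mod_eq_of_lt (by omega), Nat.mod_eq_of_lt (by omega)] at hmod

lemma exists_cycVertex_succ_left {N a : ℕ} (m : ℕ) (ha : a ≤ N) :
    ∃ a' ≤ N, cycVertex N (m + 1) a = cycVertex N m a' ∧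
      (a = N ∧ a' = 0 ∨ a < N ∧ a' = a + 1) := by
  rcases ha.lt_or_eq with ha | rfl
  · exact ⟨a + 1, ha, cycVertex_succ_left N m a, Or.inr ⟨ha, rfl⟩⟩
  · refine ⟨0, Nat.zero_le a, ?_, Or.inl ⟨rfl, rfl⟩⟩
    rw [cycVertex_succ_left, cycVertex_period]

lemma bmut_apply_of_nonpos {k i j : ℕ} {B : ℕ → ℕ → ℤ} (hkj : B k j ≤ 0) (hik : 0 ≤ B i k) :
    bmut k B i j = if i = k ∨ j = k then -B i j else B i j := by
  simp only [bmut, max_eq_right hkj, max_eq_right (neg_nonpos.mpr hik), mul_zero, zero_mul,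
    add_zero]

lemma b0_one_nonpos (N j : ℕ) : b0 N 1 j ≤ 0 := by
  unfold b0; split_ifs <;> omega

lemma b0_one_right_nonneg {N : ℕ} (hN : 1 ≤ N) (i : ℕ) : 0 ≤ b0 N i 1 := by
  unfold b0; split_ifs <;> omega

lemma Bseq_cycVertex {N : ℕ} (hN : 1 ≤ N) (m : ℕ) {a b : ℕ} (ha : a ≤ N) (hb : b ≤ N) :
    Bseq N m (cycVertex N m a) (cycVertex N m b) = b0 N (a + 1) (b + 1) := by
  induction m generalizing a b with
  | zero => rw [cycVertex_zero_left ha, cycVertex_zero_left hb]; rfl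
  | succ m ih =>
    obtain ⟨a', ha', hva, hA⟩ := exists_cycVertex_succ_left m ha
    obtain ⟨b', hb', hvb, hB⟩ := exists_cycVertex_succ_left m hb
    rw [hva, hvb]
    change bmut (cycVertex N m 0) (Bseq N m) _ _ = _
    rw [bmut_apply_of_nonpos (by rw [ih (Nat.zero_le N) hb']; exact b0_one_nonpos N _)
        (by rw [ih ha' (Nat.zero_le N)]; exact b0_one_right_nonneg hN _), ih ha' hb']
    simp only [cycVertex_inj ha' (Nat.zero_le N), cycVertex_inj hb' (Nat.zero_le N)]
    unfold b0; split_ifs <;> omega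

def rotSeedY (N m d : ℕ) : Fin (N + 1) → ℤ := seedY N m (cycVertex N m d)

lemma coefMut_self (N k : ℕ) (B : ℕ → ℕ → ℤ) (y : ℕ → Fin (N + 1) → ℤ) :
    coefMut N k B y k = -y k := by
  funext i; simp [coefMut]

lemma coefMut_of_ne_of_nonpos {N k j : ℕ} {B : ℕ → ℕ → ℤ} (y : ℕ → Fin (N + 1) → ℤ)
    (hjk : j ≠ k) (hkj : B k j ≤ 0) :
    coefMut N k B y j = y j - B k j • (y k ⊓ 0) := by
  funext i
  simp only [coefMut, hjk, ↓reduceIte, max_eq_right hkj, zero_mul, add_zero]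
  rfl

lemma b0_one_add_two {N d : ℕ} (hd : d < N) :
    b0 N 1 (d + 2) = if d = 0 ∨ d + 1 = N then -1 else 0 := by
  unfold b0; split_ifs <;> omega

lemma rotSeedY_succ_last (N m : ℕ) : rotSeedY N (m + 1) N = -rotSeedY N m 0 := by
  rw [rotSeedY, cycVertex_succ_left, cycVertex_period]
  exact coefMut_self N _ _ _

lemma rotSeedY_succ_of_lt {N d : ℕ} (m : ℕ) (hd : d < N) :
    rotSeedY N (m + 1) d =
      rotSeedY N m (d + 1) + if d = 0 ∨ d + 1 = N then rotSeedY N m 0 ⊓ 0 else 0 := by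
  have hB := Bseq_cycVertex (by omega) m (Nat.zero_le N) (show d + 1 ≤ N by omega)
  rw [b0_one_add_two hd] at hB
  rw [rotSeedY, cycVertex_succ_left]
  change coefMut N (cycVertex N m 0) (Bseq N m) (seedY N m) _ = _
  rw [coefMut_of_ne_of_nonpos _ (by rw [Ne, cycVertex_inj] <;> omega)
    (by rw [hB]; split_ifs <;> omega), hB]
  split_ifs <;> simp [rotSeedY, sub_eq_add_neg]

lemma uvec_nonneg (N j : ℕ) : 0 ≤ uvec N j := fun i => by
  by_cases h : (i : ℕ) + 1 = j <;> simp [uvec, h]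

lemma rotSeedY_of_le {N m d : ℕ} (hm : m ≤ N + 1) (hd : d ≤ N) :
    rotSeedY N m d = if m + d ≤ N then uvec N (m + d + 1) else -uvec N (m + d - N) := by
  induction m generalizing d with
  | zero => rw [rotSeedY, cycVertex_zero_left hd, if_pos (by omega), zero_add]; rfl
  | succ m ih =>
    have hfirst : rotSeedY N m 0 = uvec N (m + 1) := by
      rw [ih (by omega) (Nat.zero_le N), if_pos (by omega)]
    rcases hd.lt_or_eq with hd | rfl
    · rw [rotSeedY_succ_of_lt m hd, hfirst, inf_eq_right.mpr (uvec_nonneg N _), ite_self, add_zero,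
        ih (by omega) hd, show m + (d + 1) = m + 1 + d by omega]
    · rw [rotSeedY_succ_last, hfirst, if_neg (by omega), show m + 1 + d - d = m + 1 by omega]

lemma nuvec_nonpos (N t : ℕ) : nuvec N t ≤ 0 := by
  unfold nuvec
  split_ifs
  · exact sub_nonpos_of_le (le_trans (neg_nonpos.mpr (uvec_nonneg N 1)) (uvec_nonneg N _))
  · exact neg_nonpos.mpr (uvec_nonneg N _)

lemma nuvec_add_period {N t : ℕ} (ht : 1 ≤ t) : nuvec N (t + N) = nuvec N t := by
  rw [nuvec, nuvec, show t + N - 1 = t - 1 + N by omega, Nat.add_mod_right]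

lemma nuvec_succ_of_lt {N d : ℕ} (hd : 1 ≤ d) (hdN : d < N) :
    nuvec N (d + 1) = -uvec N (d + 1) := by
  rw [nuvec, Nat.add_sub_cancel, Nat.mod_eq_of_lt hdN, if_neg (by omega)]

lemma Cvec_zero (N : ℕ) : Cvec N 0 = 0 := rfl

lemma Cvec_succ (N t : ℕ) : Cvec N (t + 1) = Cvec N t + nuvec N (t + 1) :=
  Finset.sum_Icc_succ_top (by omega) _

lemma Cvec_one (N : ℕ) : Cvec N 1 = -uvec N 1 - uvec N (N + 1) := by
  rw [Cvec_succ, Cvec_zero, zero_add, nuvec, if_pos (by simp)]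

lemma Cvec_antitone (N : ℕ) : Antitone (Cvec N) :=
  antitone_nat_of_succ_le fun t => by
    rw [Cvec_succ]; exact add_le_of_nonpos_right (nuvec_nonpos N _)

lemma Cvec_succ_add_uvec_nonpos (N t : ℕ) : Cvec N (t + 1) + uvec N (N + 1) ≤ 0 :=
  calc Cvec N (t + 1) + uvec N (N + 1) ≤ Cvec N 1 + uvec N (N + 1) := by
        gcongr; exact Cvec_antitone N (Nat.le_add_left 1 t)
    _ = -uvec N 1 := by rw [Cvec_one]; abel
    _ ≤ 0 := neg_nonpos.mpr (uvec_nonneg N 1)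

lemma Cvec_add_period (N t : ℕ) : Cvec N (t + N) = Cvec N t + Cvec N N := by
  induction t with
  | zero => rw [zero_add, Cvec_zero, zero_add]
  | succ t ih =>
    rw [add_right_comm, Cvec_succ, ih, add_right_comm t, nuvec_add_period (by omega), Cvec_succ]
    abel

lemma Cvec_mul_add (N a t : ℕ) : Cvec N (a * N + t) = a • Cvec N N + Cvec N t := by
  induction a with
  | zero => rw [zero_mul, zero_add, zero_smul, zero_add]
  | succ a ih => rw [add_mul, one_mul, add_right_comm, Cvec_add_period, ih, succ_nsmul]; abel

def IsSteady (N t : ℕ) : Prop :=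
  rotSeedY N (t + N + 1) 0 = Cvec N (t + 1) + uvec N (N + 1) ∧
    (∀ d, 1 ≤ d → d < N → rotSeedY N (t + N + 1) d = nuvec N (t + 1 + d)) ∧
    rotSeedY N (t + N + 1) N = -(Cvec N t + uvec N (N + 1))

lemma isSteady_zero (N : ℕ) : IsSteady N 0 := by
  have hramp : ∀ d ≤ N, rotSeedY N (0 + N + 1) d = -uvec N (d + 1) := fun d hd => by
    rw [rotSeedY_of_le (by omega) hd, if_neg (by omega), show 0 + N + 1 + d - N = d + 1 by omega]
  refine ⟨?_, fun d hd hdN => ?_, ?_⟩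
  · rw [hramp 0 (Nat.zero_le N), Cvec_one]; abel
  · rw [hramp d hdN.le, zero_add, add_comm 1 d, nuvec_succ_of_lt hd hdN]
  · rw [hramp N le_rfl, Cvec_zero, zero_add]

lemma IsSteady.succ {N t : ℕ} (hN : 2 ≤ N) (h : IsSteady N t) : IsSteady N (t + 1) := by
  obtain ⟨hfirst, hmid, hlast⟩ := h
  have hinf : rotSeedY N (t + N + 1) 0 ⊓ 0 = Cvec N (t + 1) + uvec N (N + 1) := by
    rw [hfirst]; exact inf_eq_left.mpr (Cvec_succ_add_uvec_nonpos N t)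
  rw [IsSteady, add_right_comm t 1]
  refine ⟨?_, fun d hd hdN => ?_, ?_⟩
  · rw [rotSeedY_succ_of_lt _ (by omega), if_pos (Or.inl rfl), hinf, hmid 1 le_rfl (by omega),
      Cvec_succ N (t + 1)]
    abel
  · rw [rotSeedY_succ_of_lt _ hdN]
    rcases (show d + 1 ≤ N by omega).lt_or_eq with hd' | hd'
    · rw [if_neg (by omega), hmid (d + 1) (by omega) hd', add_zero,
        show t + 1 + (d + 1) = t + 1 + 1 + d by ring]
    · rw [if_pos (Or.inr hd'), hd', hlast, hinf, Cvec_succ,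
        show t + 1 + 1 + d = t + 1 + N by omega, nuvec_add_period (by omega)]
      abel
  · rw [rotSeedY_succ_last, hfirst]

lemma isSteady {N : ℕ} (hN : 2 ≤ N) (t : ℕ) : IsSteady N t := by
  induction t with
  | zero => exact isSteady_zero N
  | succ t ih => exact ih.succ hN

theorem stmt7 (N : ℕ) (hN : 2 ≤ N) :
    ∀ n s : ℕ, 1 ≤ s → s ≤ N → ∀ k, 1 ≤ k → k ≤ N + 1 →
      seedY N ((n * N + s) * (N + 1) + k - 1) k =
        (n * (N + 1) + s - 1) • Cvec N N + Cvec N (s + k - 1) + uvec N (N + 1) := by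
  rintro n s hs - k hk hkN
  obtain ⟨s, rfl⟩ := Nat.exists_eq_add_of_le' hs
  obtain ⟨k, rfl⟩ := Nat.exists_eq_add_of_le' hk
  set t := (n * N + s) * (N + 1) + k
  have hstep : (n * N + (s + 1)) * (N + 1) + (k + 1) - 1 = t + N + 1 := by
    rw [Nat.add_succ_sub_one]; ring
  have hvertex : cycVertex N (t + N + 1) 0 = k + 1 := by
    rw [cycVertex, add_zero, show t + N + 1 = k + (n * N + s + 1) * (N + 1) by ring,
      Nat.add_mul_mod_self_right, Nat.mod_eq_of_lt (by omega)]
  have hindex : t + 1 = (n * (N + 1) + s) * N + (s + 1 + k) := by ring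
  rw [hstep, ← hvertex, ← rotSeedY, (isSteady hN t).1, hindex, Cvec_mul_add, hvertex,
    Nat.add_succ_sub_one, Nat.add_succ_sub_one]
end

section
/- The quadratic recurrence is non-autonomously linearized: for every t ≥ 1, z_1^{t+1} = λ_N^t z_{N+1}^t − z_N^t; z_2^{t+1} = λ_1^t z_1^{t+1} − z_{N+1}^t; and z_{i+2}^{t+1} = λ_{i+1}^t z_{i+1}^{t+1} − z_i^{t+1} for i = 1,…,N−1. -/
/-!
Fix `t` and write `u_j = z_j^t`, `w_j = z_j^{t+1}`, extended by the boundary conventions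
`w_0 = u_{N+1}` and `u_{N+2} = w_1`. The recurrence says that the discrete Wronskian
`w_{j+1} u_{j+1} - w_j u_{j+2}` equals `1` for every `j`; subtracting two consecutive instances gives
`(w_{j+2} + w_j) u_{j+2} = w_{j+1} (u_{j+1} + u_{j+3})`, a linear three-term relation in `w` with
coefficient `(u_{j+1} + u_{j+3}) / u_{j+2}`. This coefficient is `λ_{j+1}^t`, also for `j + 1 = N`
once `w_1` is eliminated through the recurrence at `j = 0`.
-/

def ext {K : Type*} (N : ℕ) (f : ℕ → ℕ → K) (i t : ℕ) : K :=
  if i = 0 then f (N + 1) (t - 1) else if i = N + 2 then f 1 (t + 1) else f i t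

def lam {K : Type*} [Field K] (N : ℕ) (z : ℕ → ℕ → K) (i t : ℕ) : K :=
  if i = N then (z 1 t * z N t + z 2 t * z (N + 1) t + 1) / (z 1 t * z (N + 1) t)
  else (z i t + z (i + 2) t) / z (i + 1) t

theorem eq_div_mul_sub_of_wronskian_eq_one {K : Type*} [Field K] {w₀ w₁ w₂ u₁ u₂ u₃ : K}
    (hu₂ : u₂ ≠ 0) (h₁ : w₁ * u₁ = w₀ * u₂ + 1) (h₂ : w₂ * u₂ = w₁ * u₃ + 1) :
    w₂ = (u₁ + u₃) / u₂ * w₁ - w₀ := by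
  field_simp
  linear_combination h₂ - h₁

theorem ext_of_ne {K : Type*} {N i : ℕ} (f : ℕ → ℕ → K) (h₀ : i ≠ 0) (h₂ : i ≠ N + 2) (s : ℕ) :
    ext N f i s = f i s := by
  simp [ext, h₀, h₂]

theorem ext_zero_succ {K : Type*} {N : ℕ} (f : ℕ → ℕ → K) (s : ℕ) :
    ext N f 0 (s + 1) = f (N + 1) s := by
  simp [ext]

theorem ext_add_two {K : Type*} {N : ℕ} (f : ℕ → ℕ → K) (s : ℕ) :
    ext N f (N + 2) s = f 1 (s + 1) := by
  simp [ext]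

def SolvesRecurrence {K : Type*} [Field K] (N : ℕ) (z : ℕ → ℕ → K) : Prop :=
  ∀ t, 1 ≤ t → ∀ i, 1 ≤ i → i ≤ N + 1 →
    z i (t + 1) * z i t = ext N z (i - 1) (t + 1) * ext N z (i + 1) t + 1

namespace SolvesRecurrence

variable {K : Type*} [Field K] {N : ℕ} {z : ℕ → ℕ → K} {t : ℕ}

theorem ext_mul_ext (hrec : SolvesRecurrence N z) (ht : 1 ≤ t) {k : ℕ} (hk : k ≤ N) :
    ext N z (k + 1) (t + 1) * ext N z (k + 1) t = ext N z k (t + 1) * ext N z (k + 2) t + 1 := by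
  simpa only [ext_of_ne z (Nat.succ_ne_zero k) (by omega : k + 1 ≠ N + 2), Nat.add_sub_cancel]
    using hrec t ht (k + 1) (by omega) (by omega)

theorem one_mul_one (hrec : SolvesRecurrence N z) (ht : 1 ≤ t) (hN : 1 ≤ N) :
    z 1 (t + 1) * z 1 t = z (N + 1) t * z 2 t + 1 := by
  simpa only [ext_zero_succ, ext_of_ne z one_ne_zero (by omega : 1 ≠ N + 2),
    ext_of_ne z two_ne_zero (by omega : 2 ≠ N + 2), zero_add] using hrec.ext_mul_ext ht (Nat.zero_le N)

theorem lam_eq (hrec : SolvesRecurrence N z) (hz : ∀ i t, 1 ≤ i → i ≤ N + 1 → 1 ≤ t → z i t ≠ 0)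
    (ht : 1 ≤ t) {i : ℕ} (hi₁ : 1 ≤ i) (hiN : i ≤ N) :
    lam N z i t = (ext N z i t + ext N z (i + 2) t) / ext N z (i + 1) t := by
  rw [ext_of_ne z (by omega : i ≠ 0) (by omega), ext_of_ne z (by omega : i + 1 ≠ 0) (by omega), lam]
  rcases eq_or_ne N i with rfl | hi
  · have hz₁ := hz 1 t le_rfl (by omega) ht
    have hzN := hz (N + 1) t (by omega) le_rfl ht
    rw [if_pos rfl, ext_add_two, div_eq_div_iff (mul_ne_zero hz₁ hzN) hzN]
    linear_combination -z (N + 1) t * hrec.one_mul_one ht hi₁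
  · rw [if_neg hi.symm, ext_of_ne z (by omega : i + 2 ≠ 0) (by omega)]

theorem eq_lam_mul_sub (hrec : SolvesRecurrence N z)
    (hz : ∀ i t, 1 ≤ i → i ≤ N + 1 → 1 ≤ t → z i t ≠ 0) (ht : 1 ≤ t) {k : ℕ} (hk : k + 1 ≤ N) :
    z (k + 2) (t + 1) = lam N z (k + 1) t * z (k + 1) (t + 1) - ext N z k (t + 1) := by
  have hu : ext N z (k + 2) t ≠ 0 := by
    rw [ext_of_ne z (by omega) (by omega)]
    exact hz (k + 2) t (by omega) (by omega) ht
  have h := eq_div_mul_sub_of_wronskian_eq_one hu (hrec.ext_mul_ext ht (by omega : k ≤ N))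
    (hrec.ext_mul_ext ht (by omega : k + 1 ≤ N))
  rw [hrec.lam_eq hz ht (Nat.le_add_left 1 k) hk,
    ← ext_of_ne (N := N) z (by omega : k + 2 ≠ 0) (by omega),
    ← ext_of_ne (N := N) z (by omega : k + 1 ≠ 0) (by omega)]
  exact h

theorem one_succ_eq_lam_mul_sub (hrec : SolvesRecurrence N z)
    (hz : ∀ i t, 1 ≤ i → i ≤ N + 1 → 1 ≤ t → z i t ≠ 0) (ht : 1 ≤ t) (hN : 1 ≤ N) :
    z 1 (t + 1) = lam N z N t * z (N + 1) t - z N t := by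
  rw [hrec.lam_eq hz ht hN le_rfl, ext_of_ne z (by omega : N ≠ 0) (by omega), ext_add_two,
    ext_of_ne z (by omega : N + 1 ≠ 0) (by omega),
    div_mul_cancel₀ _ (hz (N + 1) t (by omega) le_rfl ht)]
  ring

end SolvesRecurrence

theorem stmt14 {K : Type*} [Field K] (N : ℕ) (hN : 2 ≤ N) (z : ℕ → ℕ → K)
    (hz : ∀ i t, 1 ≤ i → i ≤ N + 1 → 1 ≤ t → z i t ≠ 0)
    (hrec : ∀ t, 1 ≤ t → ∀ i, 1 ≤ i → i ≤ N + 1 →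
      z i (t + 1) * z i t = ext N z (i - 1) (t + 1) * ext N z (i + 1) t + 1) :
    ∀ t, 1 ≤ t →
      z 1 (t + 1) = lam N z N t * z (N + 1) t - z N t ∧
      z 2 (t + 1) = lam N z 1 t * z 1 (t + 1) - z (N + 1) t ∧
      (∀ i, 1 ≤ i → i ≤ N - 1 →
        z (i + 2) (t + 1) = lam N z (i + 1) t * z (i + 1) (t + 1) - z i (t + 1)) := by
  have hrec : SolvesRecurrence N z := hrec
  intro t ht
  refine ⟨hrec.one_succ_eq_lam_mul_sub hz ht (by omega), ?_, fun i hi₁ hiN => ?_⟩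
  · simpa only [ext_zero_succ] using hrec.eq_lam_mul_sub hz ht (k := 0) (by omega)
  · simpa only [ext_of_ne (N := N) z (by omega : i ≠ 0) (by omega)] using
      hrec.eq_lam_mul_sub hz ht (k := i) (by omega)
end
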